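/- Let p be an odd prime and G a finite group. Then G is p-stable if and only if for every non-cyclic p-subgroup Q of G the normalizer N_G(Q) is p-stable. -/

import Mathlib

/-!
`p`-stability passes to every subgroup `H`: for `R ≤ H` the automizer `N_H(R)/C_H(R)` embeds into
`N_G(R)/C_G(R)`, and `O_p` pulls back along injective homomorphisms. Conversely, a non-cyclic
`Q` has the same automizer in `N_G(Q)` as in `G`. For cyclic `Q` the stability condition holds in
every group: the automizer embeds into the abelian group `Aut(Q)`, and `[[a,x],x] = 1` gives
`x^m a x^{-m} = [a,x]^{-m} a`, so the image of `x` has order dividing `|Q|` and generates a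
normal `p`-subgroup.
-/

/-- `O_p(G)`: the largest normal `p`-subgroup of `G`. -/
def pCore (p : ℕ) (G : Type*) [Group G] : Subgroup G :=
  sSup {N : Subgroup G | N.Normal ∧ IsPGroup p N}

instance relCent_normal {G : Type*} [Group G] (Q : Subgroup G) :
    ((Subgroup.centralizer (Q : Set G)).subgroupOf (Subgroup.normalizer (Q : Set G))).Normal := by
  rw [← Subgroup.normalizerMonoidHom_ker]
  exact MonoidHom.normal_ker _

open scoped commutatorElement

/-- A group `G` is `p`-stable if for every `p`-subgroup `Q` and every `x ∈ N_G(Q)` with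
`[[a,x],x] = 1` for all `a ∈ Q`, the image of `x` in `N_G(Q)/C_G(Q)` lies in
`O_p(N_G(Q)/C_G(Q))`. -/
def IsPStable (p : ℕ) (G : Type*) [Group G] : Prop :=
  ∀ Q : Subgroup G, IsPGroup p Q →
    ∀ x : (Subgroup.normalizer (Q : Set G)), (∀ a ∈ Q, ⁅⁅a, (x : G)⁆, (x : G)⁆ = 1) →
      (QuotientGroup.mk x :
          (Subgroup.normalizer (Q : Set G)) ⧸ (Subgroup.centralizer (Q : Set G)).subgroupOf (Subgroup.normalizer (Q : Set G))) ∈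
        pCore p ((Subgroup.normalizer (Q : Set G)) ⧸ (Subgroup.centralizer (Q : Set G)).subgroupOf (Subgroup.normalizer (Q : Set G)))

open Subgroup

variable {p : ℕ}

section pCore

variable {G H : Type*} [Group G] [Group H]

theorem le_pCore {N : Subgroup G} (hN : N.Normal) (hNp : IsPGroup p N) : N ≤ pCore p G :=
  le_sSup ⟨hN, hNp⟩

instance pCore_normal : (pCore p G).Normal :=
  sSup_normal _ fun _ hN => hN.1

theorem isPGroup_pCore : IsPGroup p (pCore p G) :=
  Sylow.sSup_of_normal _ (fun _ hN => hN.2) fun _ hN => hN.1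

theorem map_pCore_le {f : G →* H} (hf : Function.Surjective f) :
    (pCore p G).map f ≤ pCore p H := by
  rw [pCore, (gc_map_comap f).l_sSup]
  exact iSup₂_le fun N hN => le_sSup ⟨hN.1.map f hf, hN.2.map f⟩

theorem comap_pCore_le {f : G →* H} (hf : Function.Injective f) :
    (pCore p H).comap f ≤ pCore p G :=
  le_pCore inferInstance (isPGroup_pCore.comap_of_injective f hf)

theorem mem_pCore_of_mem_center {x : G} (hx : x ∈ center G) {n : ℕ} (hxn : x ^ p ^ n = 1) :
    x ∈ pCore p G := by
  have hnormal : (zpowers x).Normal := ⟨fun y hy g => by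
    rwa [mem_center_iff.mp (zpowers_le.mpr hx hy) g, mul_inv_cancel_right]⟩
  have hp : IsPGroup p (zpowers x) := by
    rintro ⟨_, k, rfl⟩
    refine ⟨n, Subtype.ext ?_⟩
    simp only [SubgroupClass.coe_pow, OneMemClass.coe_one]
    rw [← zpow_natCast, ← zpow_mul, mul_comm, zpow_mul, zpow_natCast, hxn, one_zpow]
  exact le_pCore hnormal hp (mem_zpowers x)

end pCore

section Automizer

variable {G : Type*} [Group G]

abbrev Automizer (Q : Subgroup G) : Type _ :=
  normalizer (Q : Set G) ⧸ (centralizer (Q : Set G)).subgroupOf (normalizer (Q : Set G))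

def ActsQuadratically (Q : Subgroup G) (x : G) : Prop :=
  ∀ a ∈ Q, ⁅⁅a, x⁆, x⁆ = 1

def IsPStableAt (p : ℕ) (Q : Subgroup G) : Prop :=
  ∀ x : normalizer (Q : Set G), ActsQuadratically Q x →
    (QuotientGroup.mk x : Automizer Q) ∈ pCore p (Automizer Q)

theorem isPStable_iff : IsPStable p G ↔ ∀ Q : Subgroup G, IsPGroup p Q → IsPStableAt p Q :=
  Iff.rfl

variable {H : Subgroup G} {R : Subgroup H} {Q : Subgroup G}

theorem coe_mem_normalizer_iff (hRQ : R.map H.subtype = Q) {y : H} :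
    (y : G) ∈ normalizer (Q : Set G) ↔ y ∈ normalizer (R : Set H) := by
  subst hRQ
  conv_rhs => rw [← comap_map_eq_self_of_injective H.subtype_injective R,
    ← comap_normalizer_eq_of_le_range (map_le_range _ _)]
  rfl

theorem coe_mem_centralizer_iff (hRQ : R.map H.subtype = Q) {y : H} :
    (y : G) ∈ centralizer (Q : Set G) ↔ y ∈ centralizer (R : Set H) := by
  subst hRQ
  simp only [mem_centralizer_iff, coe_map, Set.forall_mem_image, SetLike.mem_coe,
    coe_subtype, Subtype.ext_iff, coe_mul]

theorem actsQuadratically_coe_iff (hRQ : R.map H.subtype = Q) {y : H} :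
    ActsQuadratically Q y ↔ ActsQuadratically R y := by
  subst hRQ
  simp only [ActsQuadratically, ← SetLike.mem_coe, coe_map, Set.forall_mem_image, coe_subtype,
    Subtype.ext_iff, commutatorElement_def, coe_mul, coe_inv, OneMemClass.coe_one]

def automizerMap (hRQ : R.map H.subtype = Q) : Automizer R →* Automizer Q :=
  QuotientGroup.map _ _
    ((H.subtype.comp (normalizer (R : Set H)).subtype).codRestrict _
      fun y => (coe_mem_normalizer_iff hRQ).mpr y.2)
    fun _ hy => mem_subgroupOf.mpr ((coe_mem_centralizer_iff hRQ).mpr (mem_subgroupOf.mp hy))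

theorem automizerMap_injective (hRQ : R.map H.subtype = Q) :
    Function.Injective (automizerMap hRQ) := by
  refine (injective_iff_map_eq_one _).mpr fun c => QuotientGroup.induction_on c fun y hy => ?_
  have hy' :
      (QuotientGroup.mk ⟨(y : H), (coe_mem_normalizer_iff hRQ).mpr y.2⟩ : Automizer Q) = 1 := hy
  rw [QuotientGroup.eq_one_iff, mem_subgroupOf] at hy' ⊢
  exact (coe_mem_centralizer_iff hRQ).mp hy'

theorem automizerMap_surjective (hRQ : R.map H.subtype = Q) (hQH : normalizer (Q : Set G) ≤ H) :
    Function.Surjective (automizerMap hRQ) :=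
  QuotientGroup.map_surjective_of_surjective _ _ _
    (fun c => QuotientGroup.induction_on c fun x =>
      ⟨⟨⟨x, hQH x.2⟩, (coe_mem_normalizer_iff hRQ).mp x.2⟩, rfl⟩) _

theorem IsPStableAt.of_map_subtype_eq (hRQ : R.map H.subtype = Q)
    (hQ : IsPStableAt p Q) : IsPStableAt p R := fun y hy =>
  comap_pCore_le (automizerMap_injective hRQ)
    (hQ ⟨y, (coe_mem_normalizer_iff hRQ).mpr y.2⟩ ((actsQuadratically_coe_iff hRQ).mpr hy))

theorem IsPStableAt.map_subtype_eq (hRQ : R.map H.subtype = Q)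
    (hQH : normalizer (Q : Set G) ≤ H) (hR : IsPStableAt p R) : IsPStableAt p Q := fun x hx =>
  map_pCore_le (automizerMap_surjective hRQ hQH) <| mem_map_of_mem _ <|
    hR ⟨⟨x, hQH x.2⟩, (coe_mem_normalizer_iff hRQ).mp x.2⟩ ((actsQuadratically_coe_iff hRQ).mp hx)

theorem IsPStable.subgroup (h : IsPStable p G) (H : Subgroup G) : IsPStable p H :=
  isPStable_iff.mpr fun _ hR => (isPStable_iff.mp h _ (hR.map _)).of_map_subtype_eq rfl

theorem conj_pow_eq_commutatorElement_inv_pow_mul {a x : G} (h : Commute ⁅a, x⁆ x) (m : ℕ) :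
    x ^ m * a * (x ^ m)⁻¹ = ⁅a, x⁆⁻¹ ^ m * a := by
  induction m with
  | zero => simp
  | succ m ih =>
    calc x ^ (m + 1) * a * (x ^ (m + 1))⁻¹ = x * (x ^ m * a * (x ^ m)⁻¹) * x⁻¹ := by group
      _ = ⁅a, x⁆⁻¹ ^ m * (x * a * x⁻¹) := by
        rw [ih, ← mul_assoc, ← (h.inv_left.pow_left m).eq, mul_assoc, mul_assoc, mul_assoc]
      _ = ⁅a, x⁆⁻¹ ^ (m + 1) * a := by rw [pow_succ, commutatorElement_def]; group

theorem pow_card_mem_centralizer [Finite Q] {x : G} (hxQ : x ∈ normalizer (Q : Set G))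
    (hx : ActsQuadratically Q x) : x ^ Nat.card Q ∈ centralizer (Q : Set G) := by
  refine mem_centralizer_iff.mpr fun a ha => ?_
  have hc : ⁅a, x⁆ ∈ Q := by
    rw [show ⁅a, x⁆ = a * (x * a⁻¹ * x⁻¹) by group]
    exact Q.mul_mem ha ((mem_normalizer_iff.mp hxQ a⁻¹).mp (Q.inv_mem ha))
  have hc_pow : ⁅a, x⁆ ^ Nat.card Q = 1 := by
    simpa only [SubgroupClass.coe_pow, OneMemClass.coe_one] using
      congrArg Subtype.val (pow_card_eq_one' (x := (⟨_, hc⟩ : Q)))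
  have := conj_pow_eq_commutatorElement_inv_pow_mul
    (commutatorElement_eq_one_iff_commute.mp (hx a ha)) (Nat.card Q)
  rw [inv_pow, hc_pow, inv_one, one_mul, mul_inv_eq_iff_eq_mul] at this
  exact this.symm

theorem mk_pow_card_eq_one [Finite Q] (x : normalizer (Q : Set G)) (hx : ActsQuadratically Q x) :
    (QuotientGroup.mk x : Automizer Q) ^ Nat.card Q = 1 := by
  rw [← QuotientGroup.mk_pow, QuotientGroup.eq_one_iff, mem_subgroupOf, coe_pow]
  exact pow_card_mem_centralizer x.2 hx

def Automizer.toMulAut (Q : Subgroup G) : Automizer Q →* MulAut Q :=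
  QuotientGroup.lift _ Q.normalizerMonoidHom (normalizerMonoidHom_ker Q).ge

theorem Automizer.toMulAut_injective (Q : Subgroup G) : Function.Injective (toMulAut Q) := by
  rw [← MonoidHom.ker_eq_bot_iff, toMulAut, QuotientGroup.ker_lift, normalizerMonoidHom_ker,
    QuotientGroup.map_mk'_self]

theorem IsCyclic.commute_mulAut {K : Type*} [Group K] [IsCyclic K] (σ τ : MulAut K) :
    Commute σ τ := by
  simpa using (Commute.all (mulAutMulEquiv K σ) (mulAutMulEquiv K τ)).map (mulAutMulEquiv K).symm

theorem Automizer.mem_center_of_isCyclic [IsCyclic Q] (c : Automizer Q) :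
    c ∈ center (Automizer Q) :=
  mem_center_iff.mpr fun d => toMulAut_injective Q <| by
    simp only [map_mul, (IsCyclic.commute_mulAut _ _).eq]

theorem isPStableAt_of_isCyclic [Fact p.Prime] [Finite Q] [IsCyclic Q]
    (hQ : IsPGroup p Q) : IsPStableAt p Q := fun x hx => by
  obtain ⟨n, hn⟩ := IsPGroup.iff_card.mp hQ
  exact mem_pCore_of_mem_center (Automizer.mem_center_of_isCyclic _) (hn ▸ mk_pow_card_eq_one x hx)

end Automizer

theorem pStable_iff_normalizers_pStable_general (p : ℕ) (hp : p.Prime)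
    (G : Type*) [Group G] [Finite G] :
    IsPStable p G ↔
      ∀ Q : Subgroup G, IsPGroup p Q → ¬IsCyclic Q → IsPStable p (Subgroup.normalizer (Q : Set G)) := by
  have := Fact.mk hp
  refine ⟨fun h Q _ _ => h.subgroup _, fun h => isPStable_iff.mpr fun Q hQ => ?_⟩
  by_cases hcyc : IsCyclic Q
  · exact isPStableAt_of_isCyclic hQ
  · have hR : IsPGroup p (Q.subgroupOf (normalizer (Q : Set G))) :=
      hQ.comap_of_injective _ (normalizer (Q : Set G)).subtype_injective
    exact (isPStable_iff.mp (h Q hQ hcyc) _ hR).map_subtype_eq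
      (map_subgroupOf_eq_of_le le_normalizer) le_rfl

/-- A finite group `G` (`p` an odd prime) is `p`-stable if and only if the normalizer of
every non-cyclic `p`-subgroup of `G` is `p`-stable. -/
theorem pStable_iff_normalizers_pStable (p : ℕ) (hp : p.Prime) (hodd : Odd p)
    (G : Type*) [Group G] [Finite G] :
    IsPStable p G ↔
      ∀ Q : Subgroup G, IsPGroup p Q → ¬IsCyclic Q → IsPStable p (Subgroup.normalizer (Q : Set G)) :=
  pStable_iff_normalizers_pStable_general p hp G
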